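/- If two rooted trees S and T satisfy Lindell's canonical order relation with S ≤ T and T ≤ S (i.e., neither is strictly smaller), then S and T are isomorphic as rooted trees. -/

import Mathlib

/-- Rooted trees with unordered (listed) children. -/
inductive RTree : Type where
  | node : List RTree → RTree

mutual
/-- Auxiliary: total size of a list of rooted trees. -/
def RTree.sizeList : List RTree → ℕ
  | [] => 0
  | c :: cs => RTree.size c + RTree.sizeList cs

/-- The number of nodes of a rooted tree. -/
def RTree.size : RTree → ℕ
  | .node cs => 1 + RTree.sizeList cs
end

/-- Isomorphism of rooted trees: a bijection of vertices preserving the root and the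
parent-child relation, i.e., the children correspond up to permutation and recursive
isomorphism. -/
inductive RTree.Iso : RTree → RTree → Prop where
  | node (cs ds ds' : List RTree) :
      ds.Perm ds' → List.Forall₂ RTree.Iso cs ds' → RTree.Iso (.node cs) (.node ds)

/-- Lexicographic comparison of lists with respect to a strict order `r`, where two
entries are considered tied when neither is `r`-smaller than the other. -/
inductive ListLex {α : Type*} (r : α → α → Prop) : List α → List α → Prop where
  | head {a b : α} {l₁ l₂ : List α} : r a b → ListLex r (a :: l₁) (b :: l₂)
  | tail {a b : α} {l₁ l₂ : List α} :
      ¬ r a b → ¬ r b a → ListLex r l₁ l₂ → ListLex r (a :: l₁) (b :: l₂)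

/-!
Lindell's order is a strict weak order, by induction on a size bound `m`: trees of size `< m + 1`
are compared through their children, of size `< m`. On a set where `r` is a strict weak order,
lists can be sorted, two sorted permutations of the same list are pointwise incomparable, and
`ListLex r` is asymmetric and cotransitive on lists of equal length, which makes the comparison of
sorted child lists independent of the chosen sorting.

If neither of `S`, `T` is smaller, they have the same size and degree and neither sorted child list
is lexicographically smaller, so the sorted child lists are pointwise incomparable; by induction on
size, corresponding children are isomorphic.
-/

open List

structure IsStrictWeakOrderOn {α : Type*} (r : α → α → Prop) (s : Set α) : Prop where
  asymm ⦃a b : α⦄ : a ∈ s → b ∈ s → r a b → ¬ r b a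
  lt_or_lt ⦃a b c : α⦄ : a ∈ s → b ∈ s → c ∈ s → r a c → r a b ∨ r b c

def SortedListLex {α : Type*} (r : α → α → Prop) (l₁ l₂ : List α) : Prop :=
  ∃ l₁' l₂' : List α, l₁.Perm l₁' ∧ l₂.Perm l₂' ∧
    l₁'.Pairwise (fun x y => ¬ r y x) ∧ l₂'.Pairwise (fun x y => ¬ r y x) ∧ ListLex r l₁' l₂'

theorem forall₂_incompRel_iff_not_listLex {α : Type*} {r : α → α → Prop} :
    ∀ {l₁ l₂ : List α}, l₁.length = l₂.length →
      (Forall₂ (IncompRel r) l₁ l₂ ↔ ¬ ListLex r l₁ l₂ ∧ ¬ ListLex r l₂ l₁)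
  | [], [], _ => ⟨fun _ => ⟨nofun, nofun⟩, fun _ => .nil⟩
  | a :: t₁, b :: t₂, hlen => by
    rw [forall₂_cons, forall₂_incompRel_iff_not_listLex (by simpa using hlen)]
    constructor
    · rintro ⟨⟨hab, hba⟩, ht₁₂, ht₂₁⟩
      constructor
      · rintro (hab' | ⟨-, -, ht⟩)
        exacts [hab hab', ht₁₂ ht]
      · rintro (hba' | ⟨-, -, ht⟩)
        exacts [hba hba', ht₂₁ ht]
    · rintro ⟨h₁₂, h₂₁⟩
      have hab : ¬ r a b := fun h => h₁₂ (.head h)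
      have hba : ¬ r b a := fun h => h₂₁ (.head h)
      exact ⟨⟨hab, hba⟩, fun h => h₁₂ (.tail hab hba h), fun h => h₂₁ (.tail hba hab h)⟩

namespace IsStrictWeakOrderOn

variable {α : Type*} {r : α → α → Prop} {s : Set α} {a b c : α}

theorem irrefl (h : IsStrictWeakOrderOn r s) (ha : a ∈ s) : ¬ r a a :=
  fun haa => h.asymm ha ha haa haa

theorem not_trans (h : IsStrictWeakOrderOn r s) (ha : a ∈ s) (hb : b ∈ s) (hc : c ∈ s)
    (hab : ¬ r a b) (hbc : ¬ r b c) : ¬ r a c :=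
  fun hac => (h.lt_or_lt ha hb hc hac).elim hab hbc

theorem incompRel_trans (h : IsStrictWeakOrderOn r s) (ha : a ∈ s) (hb : b ∈ s) (hc : c ∈ s)
    (hab : IncompRel r a b) (hbc : IncompRel r b c) : IncompRel r a c :=
  ⟨h.not_trans ha hb hc hab.1 hbc.1, h.not_trans hc hb ha hbc.2 hab.2⟩

theorem forall₂_incompRel_refl (h : IsStrictWeakOrderOn r s) {l : List α}
    (hl : ∀ x ∈ l, x ∈ s) : Forall₂ (IncompRel r) l l :=
  forall₂_same.2 fun x hx => ⟨h.irrefl (hl x hx), h.irrefl (hl x hx)⟩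

theorem forall₂_incompRel_trans (h : IsStrictWeakOrderOn r s) :
    ∀ {l₁ l₂ l₃ : List α}, (∀ x ∈ l₁, x ∈ s) → (∀ x ∈ l₂, x ∈ s) → (∀ x ∈ l₃, x ∈ s) →
      Forall₂ (IncompRel r) l₁ l₂ → Forall₂ (IncompRel r) l₂ l₃ → Forall₂ (IncompRel r) l₁ l₃
  | _, _, _, _, _, _, .nil, .nil => .nil
  | _, _, _, h₁, h₂, h₃, .cons hab h₁₂, .cons hbc h₂₃ => by
    rw [forall_mem_cons] at h₁ h₂ h₃
    exact .cons (h.incompRel_trans h₁.1 h₂.1 h₃.1 hab hbc)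
      (h.forall₂_incompRel_trans h₁.2 h₂.2 h₃.2 h₁₂ h₂₃)

theorem exists_perm_pairwise (h : IsStrictWeakOrderOn r s) {l : List α}
    (hl : ∀ x ∈ l, x ∈ s) : ∃ l', l.Perm l' ∧ l'.Pairwise (fun x y => ¬ r y x) := by
  classical
  let le : {x // x ∈ l} → {x // x ∈ l} → Bool := fun x y => decide (¬ r y x)
  refine ⟨(l.attach.mergeSort le).map Subtype.val, ?_, ?_⟩
  · simpa using ((mergeSort_perm l.attach le).map Subtype.val).symm
  · refine pairwise_map.2 ((pairwise_mergeSort ?_ ?_ _).imp (by simp [le]))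
    · intro x y z hxy hyz
      simpa [le] using h.not_trans (hl _ z.2) (hl _ y.2) (hl _ x.2) (by simpa [le] using hyz)
        (by simpa [le] using hxy)
    · intro x y
      simpa [le, or_iff_not_imp_left] using h.asymm (hl _ y.2) (hl _ x.2)

theorem forall₂_incompRel_cons_erase [DecidableEq α] (h : IsStrictWeakOrderOn r s) {a : α} :
    ∀ {l : List α}, (∀ x ∈ l, x ∈ s) → l.Pairwise (fun x y => ¬ r y x) → a ∈ l →
      (∀ x ∈ l, ¬ r x a) → Forall₂ (IncompRel r) (a :: l.erase a) l
  | b :: t, hl, hsorted, ha, hmin => by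
    obtain ⟨hb, ht⟩ := forall_mem_cons.1 hl
    obtain ⟨hbt, htsorted⟩ := pairwise_cons.1 hsorted
    by_cases hba : b = a
    · subst hba
      rw [erase_cons_head]
      exact h.forall₂_incompRel_refl hl
    have hat : a ∈ t := (mem_cons.1 ha).resolve_left (Ne.symm hba)
    have he : ∀ x ∈ t.erase a, x ∈ s := fun x hx => ht x (mem_of_mem_erase hx)
    have hab : IncompRel r a b := ⟨hbt a hat, hmin b mem_cons_self⟩
    rw [erase_cons_tail (by simpa using hba)]
    refine .cons hab (h.forall₂_incompRel_trans (forall_mem_cons.2 ⟨hb, he⟩)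
      (forall_mem_cons.2 ⟨ht a hat, he⟩) ht (.cons hab.symm (h.forall₂_incompRel_refl he)) ?_)
    exact h.forall₂_incompRel_cons_erase ht htsorted hat fun x hx => hmin x (mem_cons_of_mem _ hx)

theorem forall₂_incompRel_of_perm_of_pairwise (h : IsStrictWeakOrderOn r s) :
    ∀ {l₁ l₂ : List α}, (∀ x ∈ l₁, x ∈ s) → l₁.Perm l₂ → l₁.Pairwise (fun x y => ¬ r y x) →
      l₂.Pairwise (fun x y => ¬ r y x) → Forall₂ (IncompRel r) l₁ l₂
  | [], _, _, hp, _, _ => hp.nil_eq ▸ .nil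
  | a :: t, l₂, hl, hp, h₁, h₂ => by
    classical
    obtain ⟨ha, ht⟩ := forall_mem_cons.1 hl
    obtain ⟨hat, htsorted⟩ := pairwise_cons.1 h₁
    have hl₂ : ∀ x ∈ l₂, x ∈ s := fun x hx => hl x (hp.symm.subset hx)
    have hmin : ∀ x ∈ l₂, ¬ r x a := fun x hx => by
      rcases mem_cons.1 (hp.symm.subset hx) with rfl | hx
      exacts [h.irrefl ha, hat x hx]
    have htl : Forall₂ (IncompRel r) t (l₂.erase a) :=
      h.forall₂_incompRel_of_perm_of_pairwise ht (by simpa using hp.erase a) htsorted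
        (h₂.sublist (erase_sublist ..))
    exact h.forall₂_incompRel_trans hl
      (forall_mem_cons.2 ⟨ha, fun x hx => hl₂ x (mem_of_mem_erase hx)⟩) hl₂
      (.cons ⟨h.irrefl ha, h.irrefl ha⟩ htl)
      (h.forall₂_incompRel_cons_erase hl₂ h₂ (hp.subset mem_cons_self) hmin)

theorem listLex_asymm (h : IsStrictWeakOrderOn r s) :
    ∀ {l₁ l₂ : List α}, (∀ x ∈ l₁, x ∈ s) → (∀ x ∈ l₂, x ∈ s) →
      ListLex r l₁ l₂ → ¬ ListLex r l₂ l₁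
  | _, _, h₁, h₂, .head hab, .head hba =>
    h.asymm (h₁ _ mem_cons_self) (h₂ _ mem_cons_self) hab hba
  | _, _, _, _, .head hab, .tail _ hab' _ => hab' hab
  | _, _, _, _, .tail _ hba _, .head hba' => hba hba'
  | _, _, h₁, h₂, .tail _ _ ht, .tail _ _ ht' =>
    h.listLex_asymm (forall_mem_cons.1 h₁).2 (forall_mem_cons.1 h₂).2 ht ht'

theorem listLex_or (h : IsStrictWeakOrderOn r s) {l₁ l₂ l₃ : List α}
    (h₁ : ∀ x ∈ l₁, x ∈ s) (h₂ : ∀ x ∈ l₂, x ∈ s) (h₃ : ∀ x ∈ l₃, x ∈ s)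
    (hlen : min l₁.length l₃.length ≤ l₂.length) (hlex : ListLex r l₁ l₃) :
    ListLex r l₁ l₂ ∨ ListLex r l₂ l₃ := by
  induction hlex generalizing l₂ with
  | @head a c t₁ t₃ hac =>
    obtain _ | ⟨b, t₂⟩ := l₂
    · simp at hlen
    rcases h.lt_or_lt (h₁ a mem_cons_self) (h₂ b mem_cons_self) (h₃ c mem_cons_self) hac
      with hab | hbc
    exacts [.inl (.head hab), .inr (.head hbc)]
  | @tail a c t₁ t₃ hac hca ht ih =>
    obtain _ | ⟨b, t₂⟩ := l₂
    · simp at hlen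
    rw [forall_mem_cons] at h₁ h₂ h₃
    by_cases hab : r a b
    · exact .inl (.head hab)
    by_cases hbc : r b c
    · exact .inr (.head hbc)
    have hba : ¬ r b a := h.not_trans h₂.1 h₃.1 h₁.1 hbc hca
    have hcb : ¬ r c b := h.not_trans h₃.1 h₁.1 h₂.1 hca hab
    exact (ih h₁.2 h₂.2 h₃.2 (by simp at hlen; omega)).imp (.tail hab hba) (.tail hbc hcb)

theorem listLex_of_forall₂_incompRel (h : IsStrictWeakOrderOn r s) {l₁ l₁' l₂ l₂' : List α}
    (h₁ : ∀ x ∈ l₁, x ∈ s) (h₁' : ∀ x ∈ l₁', x ∈ s) (h₂ : ∀ x ∈ l₂, x ∈ s)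
    (h₂' : ∀ x ∈ l₂', x ∈ s) (hF₁ : Forall₂ (IncompRel r) l₁ l₁')
    (hF₂ : Forall₂ (IncompRel r) l₂ l₂') (hlex : ListLex r l₁ l₂) : ListLex r l₁' l₂' := by
  have hlex' : ListLex r l₁' l₂ :=
    (h.listLex_or h₁ h₁' h₂ (by simp [hF₁.length_eq]) hlex).resolve_left
      ((forall₂_incompRel_iff_not_listLex hF₁.length_eq).1 hF₁).1
  exact (h.listLex_or h₁' h₂' h₂ (by simp [hF₂.length_eq]) hlex').resolve_right
    ((forall₂_incompRel_iff_not_listLex hF₂.length_eq).1 hF₂).2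

theorem sortedListLex_asymm (h : IsStrictWeakOrderOn r s) {l₁ l₂ : List α}
    (h₁ : ∀ x ∈ l₁, x ∈ s) (h₂ : ∀ x ∈ l₂, x ∈ s) :
    SortedListLex r l₁ l₂ → ¬ SortedListLex r l₂ l₁ := by
  rintro ⟨l₁', l₂', p₁, p₂, s₁, s₂, hlex⟩ ⟨m₂, m₁, q₂, q₁, t₂, t₁, hlex'⟩
  have mem {l l' : List α} (p : l.Perm l') (hl : ∀ x ∈ l, x ∈ s) : ∀ x ∈ l', x ∈ s :=
    fun x hx => hl x (p.symm.subset hx)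
  refine h.listLex_asymm (mem q₁ h₁) (mem q₂ h₂) ?_ hlex'
  exact h.listLex_of_forall₂_incompRel (mem p₁ h₁) (mem q₁ h₁) (mem p₂ h₂) (mem q₂ h₂)
    (h.forall₂_incompRel_of_perm_of_pairwise (mem p₁ h₁) (p₁.symm.trans q₁) s₁ t₁)
    (h.forall₂_incompRel_of_perm_of_pairwise (mem p₂ h₂) (p₂.symm.trans q₂) s₂ t₂) hlex

theorem sortedListLex_or (h : IsStrictWeakOrderOn r s) {l₁ l₂ l₃ : List α}
    (h₁ : ∀ x ∈ l₁, x ∈ s) (h₂ : ∀ x ∈ l₂, x ∈ s) (h₃ : ∀ x ∈ l₃, x ∈ s)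
    (hlen : l₂.length = l₃.length) :
    SortedListLex r l₁ l₃ → SortedListLex r l₁ l₂ ∨ SortedListLex r l₂ l₃ := by
  rintro ⟨l₁', l₃', p₁, p₃, s₁, s₃, hlex⟩
  obtain ⟨l₂', p₂, s₂⟩ := h.exists_perm_pairwise h₂
  have mem {l l' : List α} (p : l.Perm l') (hl : ∀ x ∈ l, x ∈ s) : ∀ x ∈ l', x ∈ s :=
    fun x hx => hl x (p.symm.subset hx)
  refine (h.listLex_or (mem p₁ h₁) (mem p₂ h₂) (mem p₃ h₃) ?_ hlex).imp
    (fun hl => ⟨_, _, p₁, p₂, s₁, s₂, hl⟩) (fun hl => ⟨_, _, p₂, p₃, s₂, s₃, hl⟩)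
  simp [← p₂.length_eq, ← p₃.length_eq, hlen]

theorem exists_forall₂_incompRel_of_not_sortedListLex (h : IsStrictWeakOrderOn r s)
    {l₁ l₂ : List α} (h₁ : ∀ x ∈ l₁, x ∈ s) (h₂ : ∀ x ∈ l₂, x ∈ s)
    (hlen : l₁.length = l₂.length) (h₁₂ : ¬ SortedListLex r l₁ l₂)
    (h₂₁ : ¬ SortedListLex r l₂ l₁) : ∃ l, Forall₂ (IncompRel r) l₁ l ∧ l.Perm l₂ := by
  obtain ⟨l₁', p₁, s₁⟩ := h.exists_perm_pairwise h₁
  obtain ⟨l₂', p₂, s₂⟩ := h.exists_perm_pairwise h₂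
  have hF : Forall₂ (IncompRel r) l₁' l₂' :=
    (forall₂_incompRel_iff_not_listLex (by rw [← p₁.length_eq, ← p₂.length_eq, hlen])).2
      ⟨fun hl => h₁₂ ⟨_, _, p₁, p₂, s₁, s₂, hl⟩, fun hl => h₂₁ ⟨_, _, p₂, p₁, s₂, s₁, hl⟩⟩
  obtain ⟨l, hF', hp⟩ := perm_comp_forall₂ p₁ hF
  exact ⟨l, hF', hp.trans p₂.symm⟩

end IsStrictWeakOrderOn

namespace RTree

def children : RTree → List RTree
  | .node cs => cs

def sizeDegree (t : RTree) : ℕ ×ₗ ℕ :=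
  toLex (t.size, t.children.length)

theorem length_children_eq_of_sizeDegree_eq {S T : RTree} (h : S.sizeDegree = T.sizeDegree) :
    S.children.length = T.children.length :=
  (Prod.ext_iff.1 (toLex_inj.1 h)).2

theorem size_le_sizeList_of_mem {x : RTree} : ∀ {l : List RTree}, x ∈ l → x.size ≤ sizeList l
  | c :: cs, hx => by
    rw [sizeList]
    rcases mem_cons.1 hx with rfl | hx
    · omega
    · have := size_le_sizeList_of_mem hx
      omega

theorem size_lt_of_mem_children : ∀ {t x : RTree}, x ∈ t.children → x.size < t.size
  | .node cs, _, hx => by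
    have := size_le_sizeList_of_mem (l := cs) hx
    rw [size]
    omega

end RTree

def IsLindellOrder (lt : RTree → RTree → Prop) : Prop :=
  ∀ cs ds : List RTree,
    lt (.node cs) (.node ds) ↔
      (RTree.size (.node cs) < RTree.size (.node ds) ∨
       (RTree.size (.node cs) = RTree.size (.node ds) ∧ cs.length < ds.length) ∨
       (RTree.size (.node cs) = RTree.size (.node ds) ∧ cs.length = ds.length ∧
         ∃ cs' ds' : List RTree, cs.Perm cs' ∧ ds.Perm ds' ∧
           List.Pairwise (fun x y => ¬ lt y x) cs' ∧
           List.Pairwise (fun x y => ¬ lt y x) ds' ∧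
           ListLex lt cs' ds'))

namespace IsLindellOrder

variable {lt : RTree → RTree → Prop}

theorem lt_iff (h : IsLindellOrder lt) (S T : RTree) :
    lt S T ↔ S.sizeDegree < T.sizeDegree ∨
      S.sizeDegree = T.sizeDegree ∧ SortedListLex lt S.children T.children := by
  obtain ⟨cs⟩ := S
  obtain ⟨ds⟩ := T
  rw [h]
  simp only [RTree.sizeDegree, RTree.children, Prod.Lex.toLex_lt_toLex, toLex_inj, Prod.mk.injEq,
    SortedListLex, or_assoc, and_assoc]

theorem isStrictWeakOrderOn_size_lt (h : IsLindellOrder lt) :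
    ∀ m : ℕ, IsStrictWeakOrderOn lt {t | t.size < m}
  | 0 => ⟨fun _ _ ha => absurd ha (Nat.not_lt_zero _),
      fun _ _ _ ha => absurd ha (Nat.not_lt_zero _)⟩
  | m + 1 => by
    have hm := h.isStrictWeakOrderOn_size_lt m
    have hch {t : RTree} (ht : t.size < m + 1) :
        ∀ x ∈ t.children, x ∈ {t : RTree | t.size < m} :=
      fun x hx => Nat.lt_of_lt_of_le (RTree.size_lt_of_mem_children hx) (Nat.le_of_lt_succ ht)
    refine ⟨fun a b ha hb hab hba => ?_, fun a b c ha hb hc hac => ?_⟩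
    · rw [h.lt_iff] at hab hba
      rcases hab with hab | ⟨hab, hlex⟩ <;> rcases hba with hba | ⟨hba, hlex'⟩
      · exact lt_asymm hab hba
      · exact hab.ne hba.symm
      · exact hba.ne hab.symm
      · exact hm.sortedListLex_asymm (hch ha) (hch hb) hlex hlex'
    · simp only [h.lt_iff] at hac ⊢
      rcases hac with hac | ⟨hac, hlex⟩
      · rcases lt_or_ge a.sizeDegree b.sizeDegree with hab | hba
        · exact .inl (.inl hab)
        · exact .inr (.inl (hba.trans_lt hac))
      rcases lt_trichotomy a.sizeDegree b.sizeDegree with hab | hab | hba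
      · exact .inl (.inl hab)
      · exact (hm.sortedListLex_or (hch ha) (hch hb) (hch hc)
          (RTree.length_children_eq_of_sizeDegree_eq (hab.symm.trans hac)) hlex).imp
          (fun hl => .inr ⟨hab, hl⟩) (fun hl => .inr ⟨hab.symm.trans hac, hl⟩)
      · exact .inr (.inl (hac ▸ hba))

theorem iso_of_incompRel (h : IsLindellOrder lt) :
    ∀ {S T : RTree}, IncompRel lt S T → S.Iso T
  | .node cs, .node ds, ⟨hST, hTS⟩ => by
    rw [h.lt_iff] at hST hTS
    simp only [not_or, not_lt, not_and] at hST hTS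
    have hkey := le_antisymm hTS.1 hST.1
    have hsw := h.isStrictWeakOrderOn_size_lt ((RTree.node cs).size + (RTree.node ds).size)
    obtain ⟨ds', hF, hp⟩ := hsw.exists_forall₂_incompRel_of_not_sortedListLex
      (fun _ hx => Nat.lt_add_right _ (RTree.size_lt_of_mem_children hx))
      (fun _ hx => Nat.lt_add_left _ (RTree.size_lt_of_mem_children hx))
      (RTree.length_children_eq_of_sizeDegree_eq hkey) (hST.2 hkey) (hTS.2 hkey.symm)
    refine .node cs ds ds' hp.symm (((forall₂_and_left _ _).2 ⟨fun _ hx => hx, hF⟩).imp ?_)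
    rintro x y ⟨hx, hxy⟩
    exact h.iso_of_incompRel hxy
termination_by S => S.size
decreasing_by exact RTree.size_lt_of_mem_children hx

end IsLindellOrder

/-- If `lt` is Lindell's canonical order on rooted trees — `S < T` iff `|S| < |T|`,
or sizes are equal and the root of `S` has fewer children, or sizes and numbers of
children are equal and the sorted lists of subtrees compare lexicographically — then
two trees neither of which is strictly smaller than the other are isomorphic. -/
theorem lindell_order_equal_implies_iso (lt : RTree → RTree → Prop)
    (hspec : ∀ cs ds : List RTree,
      lt (.node cs) (.node ds) ↔
        (RTree.size (.node cs) < RTree.size (.node ds) ∨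
         (RTree.size (.node cs) = RTree.size (.node ds) ∧ cs.length < ds.length) ∨
         (RTree.size (.node cs) = RTree.size (.node ds) ∧ cs.length = ds.length ∧
           ∃ cs' ds' : List RTree, cs.Perm cs' ∧ ds.Perm ds' ∧
             List.Pairwise (fun x y => ¬ lt y x) cs' ∧
             List.Pairwise (fun x y => ¬ lt y x) ds' ∧
             ListLex lt cs' ds')))
    (S T : RTree) (hST : ¬ lt S T) (hTS : ¬ lt T S) : RTree.Iso S T :=
  IsLindellOrder.iso_of_incompRel hspec ⟨hST, hTS⟩
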